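/- Let 𝔩 be the F₁-Lie algebra with brackets [E₀,E₁] = [E₀,E₂] = 0, [E₁,E₂] = αE₁ + βE₂, and g with g(E₀,E₀) = g(E₁,E₁) = -g(E₂,E₂) = 1, off-diagonal zero. With the Koszul-formula connection and R(x,y,z,w) = g(R(x,y)z,w), one has R(E₁,E₂,E₁,E₂) = α² - β². In particular, the induced manifold is flat if and only if α² = β². -/

import Mathlib

noncomputable section

/-- Standard basis of ℝ³. -/
def E3 (i : Fin 3) : Fin 3 → ℝ := Pi.single i 1

/-- The B-metric g with g(e₀,e₀)=g(e₁,e₁)=1, g(e₂,e₂)=-1, off-diagonal zero. -/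
def gB (x y : Fin 3 → ℝ) : ℝ := x 0 * y 0 + x 1 * y 1 - x 2 * y 2

/-- The endomorphism φ: φe₀ = 0, φe₁ = e₂, φe₂ = -e₁. -/
def phi3 (x : Fin 3 → ℝ) : Fin 3 → ℝ := ![0, -x 2, x 1]

/-- The 1-form η = e₀*. -/
def eta3 (x : Fin 3 → ℝ) : ℝ := x 0
/-- Curvature tensor R(x,y)z = ∇ₓ∇ᵧz - ∇ᵧ∇ₓz - ∇_{[x,y]}z of a bilinear connection. -/
def curv (nabla : (Fin 3 → ℝ) →ₗ[ℝ] (Fin 3 → ℝ) →ₗ[ℝ] (Fin 3 → ℝ))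
    (br : (Fin 3 → ℝ) → (Fin 3 → ℝ) → (Fin 3 → ℝ)) (x y z : Fin 3 → ℝ) : Fin 3 → ℝ :=
  nabla x (nabla y z) - nabla y (nabla x z) - nabla (br x y) z

/-- Curvature components R(Eᵢ,Eⱼ,Eₖ,Eₗ) = g(R(Eᵢ,Eⱼ)Eₖ, Eₗ). -/
def Rc (nabla : (Fin 3 → ℝ) →ₗ[ℝ] (Fin 3 → ℝ) →ₗ[ℝ] (Fin 3 → ℝ))
    (br : (Fin 3 → ℝ) → (Fin 3 → ℝ) → (Fin 3 → ℝ)) (i j k l : Fin 3) : ℝ :=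
  gB (curv nabla br (E3 i) (E3 j) (E3 k)) (E3 l)

/-- Ricci tensor ρⱼₖ = R₀ⱼₖ₀ + R₁ⱼₖ₁ - R₂ⱼₖ₂. -/
def ricci (nabla : (Fin 3 → ℝ) →ₗ[ℝ] (Fin 3 → ℝ) →ₗ[ℝ] (Fin 3 → ℝ))
    (br : (Fin 3 → ℝ) → (Fin 3 → ℝ) → (Fin 3 → ℝ)) (j k : Fin 3) : ℝ :=
  Rc nabla br 0 j k 0 + Rc nabla br 1 j k 1 - Rc nabla br 2 j k 2

/-- Scalar curvature τ = ρ₀₀ + ρ₁₁ - ρ₂₂. -/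
def scal (nabla : (Fin 3 → ℝ) →ₗ[ℝ] (Fin 3 → ℝ) →ₗ[ℝ] (Fin 3 → ℝ))
    (br : (Fin 3 → ℝ) → (Fin 3 → ℝ) → (Fin 3 → ℝ)) : ℝ :=
  ricci nabla br 0 0 + ricci nabla br 1 1 - ricci nabla br 2 2

/-- The F₁-bracket: [E₀,E₁] = [E₀,E₂] = 0, [E₁,E₂] = αE₁ + βE₂. -/
def brF1 (α β : ℝ) (x y : Fin 3 → ℝ) : Fin 3 → ℝ :=
  ![0, α * (x 1 * y 2 - x 2 * y 1), β * (x 1 * y 2 - x 2 * y 1)]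

theorem eq_of_gB_E3 {v w : Fin 3 → ℝ} (h : ∀ k, gB v (E3 k) = gB w (E3 k)) : v = w := by
  ext k
  have hk := h k
  fin_cases k <;> simp [gB, E3] at hk ⊢ <;> linarith

/-- Since `gB` is nondegenerate, the Koszul formula determines the connection. -/
theorem eq_of_koszul (br : (Fin 3 → ℝ) → (Fin 3 → ℝ) → (Fin 3 → ℝ))
    {nabla nabla' : (Fin 3 → ℝ) →ₗ[ℝ] (Fin 3 → ℝ) →ₗ[ℝ] (Fin 3 → ℝ)}
    (hK : ∀ i j k : Fin 3, 2 * gB (nabla (E3 i) (E3 j)) (E3 k) =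
      gB (br (E3 i) (E3 j)) (E3 k) + gB (br (E3 k) (E3 i)) (E3 j) + gB (br (E3 k) (E3 j)) (E3 i))
    (hK' : ∀ i j k : Fin 3, 2 * gB (nabla' (E3 i) (E3 j)) (E3 k) =
      gB (br (E3 i) (E3 j)) (E3 k) + gB (br (E3 k) (E3 i)) (E3 j) + gB (br (E3 k) (E3 j)) (E3 i)) :
    nabla = nabla' := by
  refine LinearMap.ext_basis (Pi.basisFun ℝ (Fin 3)) (Pi.basisFun ℝ (Fin 3)) fun i j => ?_
  refine eq_of_gB_E3 fun k => ?_
  have h := (hK i j k).trans (hK' i j k).symm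
  simp only [Pi.basisFun_apply]
  exact mul_left_cancel₀ two_ne_zero h

/-- The Levi-Civita connection of `gB` for the bracket `brF1 α β`. -/
def nablaF1 (α β : ℝ) : (Fin 3 → ℝ) →ₗ[ℝ] (Fin 3 → ℝ) →ₗ[ℝ] (Fin 3 → ℝ) :=
  LinearMap.mk₂ ℝ (fun x y => (α * x 1 - β * x 2) • ![0, y 2, y 1])
    (fun x x' y => by ext k; fin_cases k <;> simp <;> ring)
    (fun a x y => by ext k; fin_cases k <;> simp <;> ring)
    (fun x y y' => by ext k; fin_cases k <;> simp <;> ring)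
    (fun a x y => by ext k; fin_cases k <;> simp <;> ring)

theorem nablaF1_apply (α β : ℝ) (x y : Fin 3 → ℝ) :
    nablaF1 α β x y = (α * x 1 - β * x 2) • ![0, y 2, y 1] := rfl

theorem nablaF1_koszul (α β : ℝ) (i j k : Fin 3) :
    2 * gB (nablaF1 α β (E3 i) (E3 j)) (E3 k) =
      gB (brF1 α β (E3 i) (E3 j)) (E3 k) + gB (brF1 α β (E3 k) (E3 i)) (E3 j)
        + gB (brF1 α β (E3 k) (E3 j)) (E3 i) := by
  fin_cases i <;> fin_cases j <;> fin_cases k <;> simp [nablaF1_apply, gB, brF1, E3] <;> ring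

/-- `∇ₓ` is `c(x) = α x₁ - β x₂` times the swap of the coordinates 1 and 2, so `∇ₓ∇ᵧz` and
`∇ᵧ∇ₓz` cancel; only `-∇_{[x,y]}z` survives, and `c([x,y]) = (α² - β²)(x₁y₂ - x₂y₁)`. -/
theorem curv_nablaF1 (α β : ℝ) (x y z : Fin 3 → ℝ) :
    curv (nablaF1 α β) (brF1 α β) x y z =
      (-(α ^ 2 - β ^ 2) * (x 1 * y 2 - x 2 * y 1)) • ![0, z 2, z 1] := by
  ext k
  fin_cases k <;> simp [curv, nablaF1_apply, brF1] <;> ring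

theorem Rc_nablaF1_one_two_one_two (α β : ℝ) :
    Rc (nablaF1 α β) (brF1 α β) 1 2 1 2 = α ^ 2 - β ^ 2 := by
  simp [Rc, curv_nablaF1, gB, E3]

theorem Rc_nablaF1_eq_zero (α β : ℝ) (h : α ^ 2 = β ^ 2) (i j k l : Fin 3) :
    Rc (nablaF1 α β) (brF1 α β) i j k l = 0 := by
  simp [Rc, curv_nablaF1, h, gB]

/-- for F₁, R(E₁,E₂,E₁,E₂) = α² - β², and flatness holds iff α² = β². -/
theorem F1_curvature (α β : ℝ)
    (nabla : (Fin 3 → ℝ) →ₗ[ℝ] (Fin 3 → ℝ) →ₗ[ℝ] (Fin 3 → ℝ))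
    (hK : ∀ i j k : Fin 3, 2 * gB (nabla (E3 i) (E3 j)) (E3 k) =
      gB (brF1 α β (E3 i) (E3 j)) (E3 k) + gB (brF1 α β (E3 k) (E3 i)) (E3 j)
        + gB (brF1 α β (E3 k) (E3 j)) (E3 i)) :
    Rc nabla (brF1 α β) 1 2 1 2 = α ^ 2 - β ^ 2 ∧
    ((∀ i j k l : Fin 3, Rc nabla (brF1 α β) i j k l = 0) ↔ α ^ 2 = β ^ 2) := by
  obtain rfl : nabla = nablaF1 α β := eq_of_koszul (brF1 α β) hK (nablaF1_koszul α β)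
  refine ⟨Rc_nablaF1_one_two_one_two α β, fun hflat => ?_, Rc_nablaF1_eq_zero α β⟩
  rw [← sub_eq_zero, ← Rc_nablaF1_one_two_one_two]
  exact hflat 1 2 1 2
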